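/- arXiv:2308.09261 — 4 statements merged into one kernel-verified Lean document; each statement's English description precedes it below -/
import Mathlib

section
/- Let B and C be bounded linear operators on H admitting A-adjoints B♯ and C♯. Then (1/2)·w_A(B² + C²) + (1/2)·max{w_A(B), w_A(C)}·| w_A(B+C) − w_A(B−C) | ≤ (w_{A,e}(B,C))². -/
noncomputable section

open scoped ComplexInnerProductSpace

variable {H : Type*} [NormedAddCommGroup H] [InnerProductSpace ℂ H] [CompleteSpace H]

/-- The semi-inner product induced by a positive operator `A`:
`⟨x,y⟩_A = ⟨Ax,y⟩` (linear in the first argument, following the paper's convention). -/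
def innerA (A : H →L[ℂ] H) (x y : H) : ℂ := ⟪y, A x⟫

/-- The seminorm induced by `A`: `‖x‖_A = ⟨Ax,x⟩^{1/2}`. -/
def normA (A : H →L[ℂ] H) (x : H) : ℝ := Real.sqrt (innerA A x x).re

/-- The `A`-numerical radius `w_A(T) = sup { |⟨Tx,x⟩_A| : ‖x‖_A = 1 }`. -/
def wA (A T : H →L[ℂ] H) : ℝ :=
  sSup {r : ℝ | ∃ x : H, normA A x = 1 ∧ r = ‖innerA A (T x) x‖}

/-- The `A`-Crawford number `c_A(T) = inf { |⟨Tx,x⟩_A| : ‖x‖_A = 1 }`. -/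
def cA (A T : H →L[ℂ] H) : ℝ :=
  sInf {r : ℝ | ∃ x : H, normA A x = 1 ∧ r = ‖innerA A (T x) x‖}

/-- The `A`-operator seminorm `‖T‖_A = sup { ‖Tx‖_A : ‖x‖_A = 1 }`. -/
def opNormA (A T : H →L[ℂ] H) : ℝ :=
  sSup {r : ℝ | ∃ x : H, normA A x = 1 ∧ r = normA A (T x)}

/-- The `A`-Euclidean operator radius of the pair `(B, C)`. -/
def wAe (A B C : H →L[ℂ] H) : ℝ :=
  sSup {r : ℝ | ∃ x : H, normA A x = 1 ∧
    r = Real.sqrt ((‖innerA A (B x) x‖)^2 + (‖innerA A (C x) x‖)^2)}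

/-- The `A`-Euclidean operator seminorm of the pair `(B, C)`. -/
def normAe (A B C : H →L[ℂ] H) : ℝ :=
  sSup {r : ℝ | ∃ x : H, normA A x = 1 ∧
    r = Real.sqrt ((normA A (B x))^2 + (normA A (C x))^2)}

/-- `Re_A(T) = (T + T♯)/2`, where `Ts` is an `A`-adjoint of `T`. -/
def ReA (T Ts : H →L[ℂ] H) : H →L[ℂ] H := (2 : ℂ)⁻¹ • (T + Ts)

/-- `Im_A(T) = (T - T♯)/(2i)`, where `Ts` is an `A`-adjoint of `T`. -/
def ImA (T Ts : H →L[ℂ] H) : H →L[ℂ] H := (2 * Complex.I)⁻¹ • (T - Ts)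

/-!
Write `p = w_A(B + C)`, `q = w_A(B - C)` and `W = w_{A,e}(B, C)`. Since
`2 (B² + C²) = (B + C)² + (B - C)²`, the power inequality `w_A(T²) ≤ w_A(T)²` gives
`w_A(B² + C²) ≤ (p² + q²) / 2`; since `B` and `C` are half the sum and half the difference of
`B ± C`, `max {w_A(B), w_A(C)} ≤ (p + q) / 2`; and `|a ± b| ≤ √2 (|a|² + |b|²)^{1/2}` gives
`p, q ≤ √2 W`. Together the left side is at most `max (p, q)² / 2 ≤ W²`.

An operator `T` with an `A`-adjoint `T♯` is bounded for `‖·‖_A`, by Reid's inequality for the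
`A`-selfadjoint `T♯ T`, so all these suprema are finite.
-/

open ContinuousLinearMap

variable {A : H →L[ℂ] H}

section Seminorm

omit [CompleteSpace H] in
lemma innerA_add_left (u v y : H) : innerA A (u + v) y = innerA A u y + innerA A v y := by
  simp only [innerA, map_add, inner_add_right]

omit [CompleteSpace H] in
lemma innerA_sub_left (u v y : H) : innerA A (u - v) y = innerA A u y - innerA A v y := by
  simp only [innerA, map_sub, inner_sub_right]

omit [CompleteSpace H] in
lemma innerA_smul_left (c : ℂ) (u y : H) : innerA A (c • u) y = c * innerA A u y := by
  simp only [innerA, map_smul, inner_smul_right]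

omit [CompleteSpace H] in
lemma innerA_smul_right (c : ℂ) (u y : H) :
    innerA A u (c • y) = starRingEnd ℂ c * innerA A u y := by
  simp only [innerA, inner_smul_left]

omit [CompleteSpace H] in
lemma normA_nonneg (x : H) : 0 ≤ normA A x := Real.sqrt_nonneg _

variable (hA : A.IsPositive)
include hA

/-- Writing `A = A^{1/2} A^{1/2}` turns the `A`-semi-inner product into an honest inner product
of the vectors `A^{1/2} x`, so Cauchy–Schwarz, homogeneity and the parallelogram law come for free. -/
lemma innerA_eq_inner_sqrt (x y : H) : innerA A x y = ⟪CFC.sqrt A y, CFC.sqrt A x⟫ := by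
  have hR : IsSelfAdjoint (CFC.sqrt A) := (CFC.sqrt_nonneg A).isSelfAdjoint
  have hAx : A x = CFC.sqrt A (CFC.sqrt A x) := by
    rw [← mul_apply_eq_comp, CFC.sqrt_mul_sqrt_self A ((nonneg_iff_isPositive A).2 hA)]
  rw [innerA, hAx]
  exact (hR.isSymmetric _ _).symm

lemma normA_eq_norm_sqrt (x : H) : normA A x = ‖CFC.sqrt A x‖ := by
  rw [normA, innerA_eq_inner_sqrt hA, ← RCLike.re_to_complex, inner_self_eq_norm_sq,
    Real.sqrt_sq (norm_nonneg _)]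

lemma normA_sq (x : H) : normA A x ^ 2 = (innerA A x x).re := by
  rw [normA_eq_norm_sqrt hA, innerA_eq_inner_sqrt hA, ← RCLike.re_to_complex,
    inner_self_eq_norm_sq]

lemma norm_innerA_le (x y : H) : ‖innerA A x y‖ ≤ normA A x * normA A y := by
  rw [innerA_eq_inner_sqrt hA, normA_eq_norm_sqrt hA, normA_eq_norm_sqrt hA, mul_comm]
  exact norm_inner_le_norm _ _

lemma innerA_conj_symm (x y : H) : starRingEnd ℂ (innerA A x y) = innerA A y x := by
  rw [innerA_eq_inner_sqrt hA, innerA_eq_inner_sqrt hA, inner_conj_symm]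

lemma normA_smul (c : ℂ) (x : H) : normA A (c • x) = ‖c‖ * normA A x := by
  rw [normA_eq_norm_sqrt hA, normA_eq_norm_sqrt hA, map_smul, norm_smul]

lemma normA_smul_inv_self {x : H} (hx : normA A x ≠ 0) :
    normA A (((normA A x)⁻¹ : ℝ) • x : H) = 1 := by
  rw [← Complex.coe_smul, normA_smul hA, Complex.norm_real, Real.norm_eq_abs,
    abs_of_nonneg (inv_nonneg.2 (normA_nonneg x)), inv_mul_cancel₀ hx]

lemma normA_add_sq_add_normA_sub_sq (x y : H) :
    normA A (x + y) ^ 2 + normA A (x - y) ^ 2 = 2 * (normA A x ^ 2 + normA A y ^ 2) := by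
  simp only [normA_eq_norm_sqrt hA, map_add, map_sub]
  exact parallelogram_law_with_norm ℂ _ _

lemma normA_le_norm (x : H) : normA A x ≤ ‖CFC.sqrt A‖ * ‖x‖ :=
  normA_eq_norm_sqrt hA x ▸ le_opNorm _ x

end Seminorm

omit [CompleteSpace H] in
lemma wA_nonneg (A T : H →L[ℂ] H) : 0 ≤ wA A T :=
  Real.sSup_nonneg fun _ ⟨_, _, hr⟩ => hr ▸ norm_nonneg _

omit [CompleteSpace H] in
lemma wA_le {T : H →L[ℂ] H} {m : ℝ} (hm : 0 ≤ m)
    (h : ∀ x, normA A x = 1 → ‖innerA A (T x) x‖ ≤ m) : wA A T ≤ m :=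
  Real.sSup_le (fun _ ⟨x, hx, hr⟩ => hr ▸ h x hx) hm

omit [CompleteSpace H] in
lemma wAe_nonneg (A B C : H →L[ℂ] H) : 0 ≤ wAe A B C :=
  Real.sSup_nonneg fun _ ⟨_, _, hr⟩ => hr ▸ Real.sqrt_nonneg _

lemma pow_two_pow_mul_le_of_sq_le {u : ℕ → ℝ} {r : ℝ} (hr : 0 < r) (hu : 0 ≤ u 0)
    (h : ∀ n, u n ^ 2 ≤ u (n + 1) * r) (n : ℕ) : u 0 ^ 2 ^ n * r ≤ u n * r ^ 2 ^ n := by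
  induction n with
  | zero => simp
  | succ n ih =>
    refine le_of_mul_le_mul_right ?_ hr
    calc u 0 ^ 2 ^ (n + 1) * r * r = (u 0 ^ 2 ^ n * r) ^ 2 := by ring
    _ ≤ (u n * r ^ 2 ^ n) ^ 2 := pow_le_pow_left₀ (by positivity) ih 2
    _ = u n ^ 2 * r ^ 2 ^ (n + 1) := by ring
    _ ≤ u (n + 1) * r * r ^ 2 ^ (n + 1) := by gcongr; exact h n
    _ = u (n + 1) * r ^ 2 ^ (n + 1) * r := by ring

lemma le_of_forall_pow_two_pow_le_mul {a b C : ℝ} (hb : 0 ≤ b)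
    (h : ∀ n : ℕ, a ^ 2 ^ n ≤ C * b ^ 2 ^ n) : a ≤ b := by
  by_contra! hba
  rcases hb.eq_or_lt with rfl | hb
  · have := h 0
    simp only [pow_zero, pow_one, mul_zero] at this
    linarith
  · have hab : 1 < a / b := (one_lt_div hb).2 hba
    obtain ⟨n, hn⟩ := pow_unbounded_of_one_lt C hab
    have hle : (a / b) ^ n ≤ (a / b) ^ 2 ^ n := pow_le_pow_right₀ hab.le Nat.lt_two_pow_self.le
    have hC : (a / b) ^ 2 ^ n ≤ C := by
      rw [div_pow, div_le_iff₀ (by positivity)]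
      exact h n
    linarith

lemma norm_add_le_sqrt_two_mul {E : Type*} [SeminormedAddGroup E] (a b : E) :
    ‖a + b‖ ≤ √2 * √(‖a‖ ^ 2 + ‖b‖ ^ 2) := by
  rw [← Real.sqrt_mul zero_le_two]
  refine (le_abs_self _).trans (Real.abs_le_sqrt ?_)
  exact (pow_le_pow_left₀ (norm_nonneg _) (norm_add_le a b) 2).trans add_sq_le

def IsAAdjoint (A T Ts : H →L[ℂ] H) : Prop := A.comp Ts = (adjoint T).comp A

namespace IsAAdjoint

variable {R S Ss T Ts : H →L[ℂ] H}

lemma innerA_apply (h : IsAAdjoint A T Ts) (x y : H) : innerA A (Ts x) y = innerA A x (T y) := by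
  rw [innerA, innerA, ← comp_apply, h, comp_apply, adjoint_inner_right]

lemma add (hS : IsAAdjoint A S Ss) (hT : IsAAdjoint A T Ts) : IsAAdjoint A (S + T) (Ss + Ts) := by
  rw [IsAAdjoint, comp_add, hS, hT, map_add, add_comp]

lemma sub (hS : IsAAdjoint A S Ss) (hT : IsAAdjoint A T Ts) : IsAAdjoint A (S - T) (Ss - Ts) := by
  rw [IsAAdjoint, comp_sub, hS, hT, map_sub, sub_comp]

lemma mul (hS : IsAAdjoint A S Ss) (hT : IsAAdjoint A T Ts) : IsAAdjoint A (S * T) (Ts * Ss) := by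
  rw [IsAAdjoint, mul_def, mul_def, ← comp_assoc, hT, comp_assoc, hS, ← comp_assoc,
    adjoint_comp]

lemma pow (hS : IsAAdjoint A S S) (n : ℕ) : IsAAdjoint A (S ^ n) (S ^ n) := by
  induction n with
  | zero => rw [IsAAdjoint, pow_zero, one_def, comp_id, adjoint_id, id_comp]
  | succ n ih => simpa only [← pow_succ, ← pow_succ'] using ih.mul hS

lemma smul (h : IsAAdjoint A T Ts) (c : ℂ) : IsAAdjoint A (c • T) (starRingEnd ℂ c • Ts) := by
  rw [IsAAdjoint, comp_smulₛₗ, h, map_smulₛₗ adjoint, smul_comp, RingHom.id_apply]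

lemma symm (hA : A.IsPositive) (h : IsAAdjoint A T Ts) : IsAAdjoint A Ts T := by
  have h' := congrArg adjoint h
  rwa [adjoint_comp, adjoint_comp, adjoint_adjoint, hA.isSelfAdjoint.adjoint_eq, eq_comm] at h'

section

variable (hA : A.IsPositive)
include hA

lemma innerA_apply_self (h : IsAAdjoint A T Ts) (x : H) :
    innerA A (Ts x) x = starRingEnd ℂ (innerA A (T x) x) := by
  rw [h.innerA_apply, innerA_conj_symm hA]

lemma normA_apply_sq_le (h : IsAAdjoint A T Ts) (x : H) :
    normA A (T x) ^ 2 ≤ normA A (Ts (T x)) * normA A x := by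
  rw [normA_sq hA, ← h.innerA_apply]
  exact (Complex.re_le_norm _).trans (norm_innerA_le hA _ _)

/-- Reid's inequality. Iterating `‖S x‖_A² ≤ ‖S² x‖_A ‖x‖_A` along the powers `S ^ 2 ^ n` gives
`‖S x‖_A ^ 2 ^ n ≤ ‖S ^ 2 ^ n x‖_A ‖x‖_A ^ (2 ^ n - 1)`, and `‖S ^ 2 ^ n x‖_A` grows at most like
`‖S‖ ^ 2 ^ n`. -/
theorem normA_apply_le_opNorm_mul (hS : IsAAdjoint A S S) (x : H) :
    normA A (S x) ≤ ‖S‖ * normA A x := by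
  set u : ℕ → ℝ := fun n => normA A ((S ^ 2 ^ n) x)
  have hu0 : u 0 = normA A (S x) := by simp [u]
  have hsq (n : ℕ) : u n ^ 2 ≤ u (n + 1) * normA A x := by
    have h := (hS.pow (2 ^ n)).normA_apply_sq_le hA x
    rwa [← mul_apply_eq_comp, ← pow_add, ← two_mul, ← pow_succ'] at h
  rcases (normA_nonneg (A := A) x).eq_or_lt with hr | hr
  · have h := hsq 0
    rw [← hr, mul_zero, hu0] at h
    rw [← hr, mul_zero]
    nlinarith [normA_nonneg (A := A) (S x)]
  · set c := ‖CFC.sqrt A‖ * ‖x‖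
    have hbound (n : ℕ) : u n ≤ c * ‖S‖ ^ 2 ^ n :=
      calc u n ≤ ‖CFC.sqrt A‖ * ‖(S ^ 2 ^ n) x‖ := normA_le_norm hA _
      _ ≤ ‖CFC.sqrt A‖ * (‖S‖ ^ 2 ^ n * ‖x‖) := by
        gcongr
        exact ((S ^ 2 ^ n).le_opNorm x).trans
          (mul_le_mul_of_nonneg_right (norm_pow_le' S (by positivity)) (norm_nonneg x))
      _ = c * ‖S‖ ^ 2 ^ n := by ring
    refine le_of_forall_pow_two_pow_le_mul (C := c / normA A x) (by positivity) fun n => ?_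
    rw [← hu0, div_mul_eq_mul_div, le_div_iff₀ hr]
    calc u 0 ^ 2 ^ n * normA A x ≤ u n * normA A x ^ 2 ^ n :=
          pow_two_pow_mul_le_of_sq_le hr (hu0 ▸ normA_nonneg _) hsq n
    _ ≤ c * ‖S‖ ^ 2 ^ n * normA A x ^ 2 ^ n := by gcongr; exact hbound n
    _ = c * (‖S‖ * normA A x) ^ 2 ^ n := by ring

theorem exists_normA_apply_le (h : IsAAdjoint A T Ts) :
    ∃ k, ∀ x, normA A (T x) ≤ k * normA A x := by
  refine ⟨√‖Ts * T‖, fun x => ?_⟩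
  have hTsT : IsAAdjoint A (Ts * T) (Ts * T) := (h.symm hA).mul h
  refine (pow_le_pow_iff_left₀ (normA_nonneg _)
    (mul_nonneg (Real.sqrt_nonneg _) (normA_nonneg x)) two_ne_zero).1 ?_
  calc normA A (T x) ^ 2 ≤ normA A ((Ts * T) x) * normA A x := h.normA_apply_sq_le hA x
  _ ≤ ‖Ts * T‖ * normA A x * normA A x :=
    mul_le_mul_of_nonneg_right (hTsT.normA_apply_le_opNorm_mul hA x) (normA_nonneg x)
  _ = (√‖Ts * T‖ * normA A x) ^ 2 := by rw [mul_pow, Real.sq_sqrt (norm_nonneg _)]; ring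

lemma bddAbove_norm_innerA (h : IsAAdjoint A T Ts) :
    BddAbove {r : ℝ | ∃ x : H, normA A x = 1 ∧ r = ‖innerA A (T x) x‖} := by
  obtain ⟨k, hk⟩ := h.exists_normA_apply_le hA
  refine ⟨k, fun _ ⟨x, hx, hr⟩ => hr ▸ ?_⟩
  calc ‖innerA A (T x) x‖ ≤ normA A (T x) * normA A x := norm_innerA_le hA _ _
  _ ≤ k * normA A x * normA A x := mul_le_mul_of_nonneg_right (hk x) (normA_nonneg x)
  _ = k := by rw [hx, mul_one, mul_one]

lemma norm_innerA_le_wA (h : IsAAdjoint A T Ts) {x : H} (hx : normA A x = 1) :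
    ‖innerA A (T x) x‖ ≤ wA A T :=
  le_csSup (h.bddAbove_norm_innerA hA) ⟨x, hx, rfl⟩

lemma norm_innerA_le_wA_mul_sq (h : IsAAdjoint A T Ts) (z : H) :
    ‖innerA A (T z) z‖ ≤ wA A T * normA A z ^ 2 := by
  by_cases hz : normA A z = 0
  · simpa [hz] using norm_innerA_le hA (T z) z
  have hz' : 0 < normA A z := (normA_nonneg z).lt_of_ne' hz
  have hunit := h.norm_innerA_le_wA hA (normA_smul_inv_self hA hz)
  rw [← Complex.coe_smul, map_smul, innerA_smul_left, innerA_smul_right, Complex.conj_ofReal,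
    norm_mul, norm_mul, Complex.norm_real, Real.norm_eq_abs, abs_of_pos (inv_pos.2 hz')] at hunit
  calc ‖innerA A (T z) z‖
      = (normA A z)⁻¹ * ((normA A z)⁻¹ * ‖innerA A (T z) z‖) * normA A z ^ 2 := by
        field_simp
  _ ≤ wA A T * normA A z ^ 2 := by gcongr

lemma wA_eq (h : IsAAdjoint A T Ts) : wA A Ts = wA A T := by
  simp only [wA, h.innerA_apply_self hA, Complex.norm_conj]

lemma wA_smul_le (h : IsAAdjoint A T Ts) (c : ℂ) : wA A (c • T) ≤ ‖c‖ * wA A T := by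
  refine wA_le (by positivity [wA_nonneg A T]) fun x hx => ?_
  rw [smul_apply, innerA_smul_left, norm_mul]
  gcongr
  exact h.norm_innerA_le_wA hA hx

lemma wA_add_le (hS : IsAAdjoint A S Ss) (hT : IsAAdjoint A T Ts) :
    wA A (S + T) ≤ wA A S + wA A T := by
  refine wA_le (add_nonneg (wA_nonneg A S) (wA_nonneg A T)) fun x hx => ?_
  rw [add_apply, innerA_add_left]
  exact (norm_add_le _ _).trans
    (add_le_add (hS.norm_innerA_le_wA hA hx) (hT.norm_innerA_le_wA hA hx))

lemma wA_sub_le (hS : IsAAdjoint A S Ss) (hT : IsAAdjoint A T Ts) :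
    wA A (S - T) ≤ wA A S + wA A T := by
  refine wA_le (add_nonneg (wA_nonneg A S) (wA_nonneg A T)) fun x hx => ?_
  rw [sub_apply, innerA_sub_left]
  exact (norm_sub_le _ _).trans
    (add_le_add (hS.norm_innerA_le_wA hA hx) (hT.norm_innerA_le_wA hA hx))

/-- For `A`-selfadjoint `R`, polarization gives `4 Re ⟨R x, y⟩_A ≤ w_A(R) (‖x + y‖_A² + ‖x - y‖_A²)`;
take `y = R x / ‖R x‖_A`. -/
lemma normA_apply_le_wA (hR : IsAAdjoint A R R) {x : H} (hx : normA A x = 1) :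
    normA A (R x) ≤ wA A R := by
  by_cases h0 : normA A (R x) = 0
  · exact h0 ▸ wA_nonneg A R
  set y : H := ((normA A (R x))⁻¹ : ℝ) • R x with hy_def
  have hy : normA A y = 1 := normA_smul_inv_self hA h0
  have hre : (innerA A (R x) y).re = normA A (R x) := by
    rw [hy_def, ← Complex.coe_smul, innerA_smul_right, Complex.conj_ofReal, Complex.re_ofReal_mul,
      ← normA_sq hA]
    field_simp
  have hpol : innerA A (R (x + y)) (x + y) - innerA A (R (x - y)) (x - y)
      = 2 * (innerA A (R x) y + starRingEnd ℂ (innerA A (R x) y)) := by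
    rw [innerA_conj_symm hA, ← hR.innerA_apply]
    simp only [innerA, map_add, map_sub, inner_add_left, inner_sub_left, inner_add_right,
      inner_sub_right]
    ring
  have hre_pol : (innerA A (R (x + y)) (x + y)).re - (innerA A (R (x - y)) (x - y)).re
      = 4 * (innerA A (R x) y).re := by
    rw [← Complex.sub_re, hpol]
    simp only [Complex.mul_re, Complex.add_re, Complex.conj_re, Complex.add_im, Complex.conj_im]
    norm_num
    ring
  have hplus := (Complex.re_le_norm _).trans (hR.norm_innerA_le_wA_mul_sq hA (x + y))
  have hminus := ((neg_le_abs _).trans (Complex.abs_re_le_norm _)).trans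
    (hR.norm_innerA_le_wA_mul_sq hA (x - y))
  have hpar := normA_add_sq_add_normA_sub_sq hA x y
  rw [hx, hy] at hpar
  have : 4 * normA A (R x) ≤ 4 * wA A R :=
    calc 4 * normA A (R x)
        = (innerA A (R (x + y)) (x + y)).re - (innerA A (R (x - y)) (x - y)).re := by
          rw [hre_pol, hre]
    _ ≤ wA A R * (normA A (x + y) ^ 2 + normA A (x - y) ^ 2) := by linarith
    _ = 4 * wA A R := by rw [hpar]; ring
  linarith

/-- With `R = T + T♯` and `D = T - T♯` one has `R² - D♯ D = 2 (T² + T♯²)`, so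
`4 Re ⟨T² x, x⟩_A = ‖R x‖_A² - ‖D x‖_A² ≤ w_A(R)² ≤ 4 w_A(T)²`. -/
lemma re_innerA_sq_le (h : IsAAdjoint A T Ts) {x : H} (hx : normA A x = 1) :
    (innerA A (T (T x)) x).re ≤ wA A T ^ 2 := by
  have hR : IsAAdjoint A (T + Ts) (T + Ts) := by
    simpa only [add_comm Ts] using h.add (h.symm hA)
  have hD : IsAAdjoint A (T - Ts) (Ts - T) := h.sub (h.symm hA)
  have hconj : starRingEnd ℂ (innerA A (T (T x)) x) = innerA A (Ts (Ts x)) x :=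
    ((h.mul h).innerA_apply_self hA x).symm
  have hid : innerA A ((T + Ts) ((T + Ts) x)) x - innerA A ((Ts - T) ((T - Ts) x)) x
      = 2 * (innerA A (T (T x)) x + starRingEnd ℂ (innerA A (T (T x)) x)) := by
    rw [hconj]
    simp only [innerA, add_apply, sub_apply, map_add, map_sub, inner_add_right, inner_sub_right]
    ring
  have hre : 4 * (innerA A (T (T x)) x).re
      = normA A ((T + Ts) x) ^ 2 - normA A ((T - Ts) x) ^ 2 := by
    rw [normA_sq hA, normA_sq hA, ← hR.innerA_apply, ← hD.innerA_apply, ← Complex.sub_re, hid]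
    simp only [Complex.mul_re, Complex.add_re, Complex.conj_re, Complex.add_im, Complex.conj_im]
    norm_num
    ring
  have hwR : wA A (T + Ts) ≤ 2 * wA A T := by
    linarith [h.wA_add_le hA (h.symm hA), h.wA_eq hA]
  have hRx : normA A ((T + Ts) x) ≤ 2 * wA A T := (hR.normA_apply_le_wA hA hx).trans hwR
  nlinarith [pow_le_pow_left₀ (normA_nonneg _) hRx 2, sq_nonneg (normA A ((T - Ts) x))]

lemma norm_innerA_sq_le (h : IsAAdjoint A T Ts) {x : H} (hx : normA A x = 1) :
    ‖innerA A (T (T x)) x‖ ≤ wA A T ^ 2 := by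
  set z := innerA A (T (T x)) x
  by_cases hz : z = 0
  · simpa [hz] using sq_nonneg (wA A T)
  -- rotate `T` by a square root `w` of `conj z / ‖z‖`, which makes `⟨(w T)² x, x⟩_A = ‖z‖` real
  obtain ⟨w, hw⟩ := IsAlgClosed.exists_pow_nat_eq (starRingEnd ℂ z / ‖z‖) two_pos
  have hz' : (‖z‖ : ℂ) ≠ 0 := by simpa using hz
  have hw1 : ‖w‖ = 1 := by
    rw [← pow_left_inj₀ (norm_nonneg w) zero_le_one two_ne_zero, ← norm_pow, hw, norm_div,
      Complex.norm_conj, Complex.norm_real, norm_norm, div_self (norm_ne_zero_iff.2 hz), one_pow]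
  have hrot : innerA A ((w • T) ((w • T) x)) x = ‖z‖ := by
    rw [smul_apply, smul_apply, map_smul, smul_smul, innerA_smul_left, ← sq, hw,
      div_mul_eq_mul_div, mul_comm, Complex.mul_conj, Complex.normSq_eq_norm_sq]
    push_cast
    field_simp
    rfl
  calc ‖z‖ = (innerA A ((w • T) ((w • T) x)) x).re := by rw [hrot, Complex.ofReal_re]
  _ ≤ wA A (w • T) ^ 2 := (h.smul w).re_innerA_sq_le hA hx
  _ ≤ wA A T ^ 2 := by
    gcongr
    · exact wA_nonneg A _
    · simpa [hw1] using h.wA_smul_le hA w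

lemma wA_sq_le (h : IsAAdjoint A T Ts) : wA A (T * T) ≤ wA A T ^ 2 :=
  wA_le (sq_nonneg _) fun _ hx => h.norm_innerA_sq_le hA hx

end

end IsAAdjoint

section

variable {B Bs C Cs : H →L[ℂ] H} (hA : A.IsPositive)
include hA

lemma le_wAe (hB : IsAAdjoint A B Bs) (hC : IsAAdjoint A C Cs) {x : H} (hx : normA A x = 1) :
    √(‖innerA A (B x) x‖ ^ 2 + ‖innerA A (C x) x‖ ^ 2) ≤ wAe A B C := by
  refine le_csSup ⟨√(wA A B ^ 2 + wA A C ^ 2), fun _ ⟨y, hy, hr⟩ => hr ▸ ?_⟩ ⟨x, hx, rfl⟩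
  gcongr
  · exact hB.norm_innerA_le_wA hA hy
  · exact hC.norm_innerA_le_wA hA hy

lemma wA_add_le_sqrt_two_mul_wAe (hB : IsAAdjoint A B Bs) (hC : IsAAdjoint A C Cs) :
    wA A (B + C) ≤ √2 * wAe A B C := by
  refine wA_le (by positivity [wAe_nonneg A B C]) fun x hx => ?_
  rw [add_apply, innerA_add_left]
  exact (norm_add_le_sqrt_two_mul _ _).trans (by gcongr; exact le_wAe hA hB hC hx)

lemma wA_sub_le_sqrt_two_mul_wAe (hB : IsAAdjoint A B Bs) (hC : IsAAdjoint A C Cs) :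
    wA A (B - C) ≤ √2 * wAe A B C := by
  refine wA_le (by positivity [wAe_nonneg A B C]) fun x hx => ?_
  rw [sub_apply, innerA_sub_left, sub_eq_add_neg]
  refine (norm_add_le_sqrt_two_mul _ _).trans ?_
  rw [norm_neg]
  gcongr
  exact le_wAe hA hB hC hx

lemma wA_mul_self_add_mul_self_le (hB : IsAAdjoint A B Bs) (hC : IsAAdjoint A C Cs) :
    wA A (B * B + C * C) ≤ (wA A (B + C) ^ 2 + wA A (B - C) ^ 2) / 2 := by
  have hP := (hB.add hC).mul (hB.add hC)
  have hM := (hB.sub hC).mul (hB.sub hC)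
  calc wA A (B * B + C * C)
      = wA A ((2⁻¹ : ℂ) • ((B + C) * (B + C) + (B - C) * (B - C))) := by
        congr 1
        rw [eq_inv_smul_iff₀ two_ne_zero, two_smul]
        noncomm_ring
  _ ≤ ‖(2⁻¹ : ℂ)‖ * (wA A ((B + C) * (B + C)) + wA A ((B - C) * (B - C))) :=
        (hP.add hM).wA_smul_le hA _ |>.trans (by gcongr; exact hP.wA_add_le hA hM)
  _ ≤ ‖(2⁻¹ : ℂ)‖ * (wA A (B + C) ^ 2 + wA A (B - C) ^ 2) := by
        gcongr
        · exact (hB.add hC).wA_sq_le hA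
        · exact (hB.sub hC).wA_sq_le hA
  _ = (wA A (B + C) ^ 2 + wA A (B - C) ^ 2) / 2 := by norm_num; ring

lemma max_wA_le (hB : IsAAdjoint A B Bs) (hC : IsAAdjoint A C Cs) :
    max (wA A B) (wA A C) ≤ (wA A (B + C) + wA A (B - C)) / 2 := by
  have hP := hB.add hC
  have hM := hB.sub hC
  refine max_le ?_ ?_
  · calc wA A B = wA A ((2⁻¹ : ℂ) • ((B + C) + (B - C))) := by
          congr 1
          rw [eq_inv_smul_iff₀ two_ne_zero, two_smul]
          abel
    _ ≤ ‖(2⁻¹ : ℂ)‖ * (wA A (B + C) + wA A (B - C)) :=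
          ((hP.add hM).wA_smul_le hA _).trans (by gcongr; exact hP.wA_add_le hA hM)
    _ = (wA A (B + C) + wA A (B - C)) / 2 := by norm_num; ring
  · calc wA A C = wA A ((2⁻¹ : ℂ) • ((B + C) - (B - C))) := by
          congr 1
          rw [eq_inv_smul_iff₀ two_ne_zero, two_smul]
          abel
    _ ≤ ‖(2⁻¹ : ℂ)‖ * (wA A (B + C) + wA A (B - C)) :=
          ((hP.sub hM).wA_smul_le hA _).trans (by gcongr; exact hP.wA_sub_le hA hM)
    _ = (wA A (B + C) + wA A (B - C)) / 2 := by norm_num; ring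

end

theorem stmt0_general (A : H →L[ℂ] H) (hA : A.IsPositive)
    (B C Bs Cs : H →L[ℂ] H)
    (hB : A.comp Bs = (ContinuousLinearMap.adjoint B).comp A)
    (hC : A.comp Cs = (ContinuousLinearMap.adjoint C).comp A) :
    (1/2) * wA A (B * B + C * C)
      + (1/2) * max (wA A B) (wA A C) * |wA A (B + C) - wA A (B - C)|
      ≤ (wAe A B C)^2 := by
  have hB : IsAAdjoint A B Bs := hB
  have hC : IsAAdjoint A C Cs := hC
  have hsq := wA_mul_self_add_mul_self_le hA hB hC
  have hmax := max_wA_le hA hB hC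
  have hp := pow_le_pow_left₀ (wA_nonneg A _) (wA_add_le_sqrt_two_mul_wAe hA hB hC) 2
  have hq := pow_le_pow_left₀ (wA_nonneg A _) (wA_sub_le_sqrt_two_mul_wAe hA hB hC) 2
  rw [mul_pow, Real.sq_sqrt zero_le_two] at hp hq
  have hp0 := wA_nonneg A (B + C)
  have hq0 := wA_nonneg A (B - C)
  have hm0 : 0 ≤ max (wA A B) (wA A C) := (wA_nonneg A B).trans (le_max_left _ _)
  rcases abs_cases (wA A (B + C) - wA A (B - C)) with ⟨habs, _⟩ | ⟨habs, _⟩ <;> rw [habs] <;>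
    nlinarith

theorem stmt0 (A : H →L[ℂ] H) (hA : A.IsPositive) (hA0 : A ≠ 0)
    (B C Bs Cs : H →L[ℂ] H)
    (hB : A.comp Bs = (ContinuousLinearMap.adjoint B).comp A)
    (hC : A.comp Cs = (ContinuousLinearMap.adjoint C).comp A) :
    (1/2) * wA A (B * B + C * C)
      + (1/2) * max (wA A B) (wA A C) * |wA A (B + C) - wA A (B - C)|
      ≤ (wAe A B C)^2 :=
  stmt0_general A hA B C Bs Cs hB hC
end
end

section
/- Let x ∈ H with ‖x‖_A = 1 and let T be the operator on H defined by Tz = ⟨z,x⟩_A · x. Then for every complex number α, one has |α − 1| ≤ ‖αT − I‖_A ≤ max{1, |α − 1|}, where I is the identity operator. Moreover, if |α − 1| ≥ 1, then ‖αT − I‖_A = |α − 1|. -/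
noncomputable section

open scoped ComplexInnerProductSpace

variable {H : Type*} [NormedAddCommGroup H] [InnerProductSpace ℂ H] [CompleteSpace H]

/-!
Write `c = ⟨z, x⟩_A`. Since `(αT - I) z = α c x - z` and `⟨x, x⟩_A = 1`, expanding gives
`‖(αT - I) z‖_A² = |c|² |α - 1|² + (‖z‖_A² - |c|²)`. For a unit vector `z`, Cauchy–Schwarz gives
`|c| ≤ 1`, so the right side is a convex combination of `|α - 1|²` and `1`; it equals `|α - 1|²`
at `z = x`.
-/

section SeminormA

variable {E : Type*} [NormedAddCommGroup E] [InnerProductSpace ℂ E] {A : E →L[ℂ] E}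

theorem conj_innerA (hA : A.IsPositive) (u v : E) :
    starRingEnd ℂ (innerA A u v) = innerA A v u := by
  rw [innerA, innerA, inner_conj_symm, hA.inner_left_eq_inner_right]

theorem innerA_self_re_nonneg (hA : A.IsPositive) (z : E) : 0 ≤ (innerA A z z).re := by
  rw [innerA, ← inner_conj_symm, Complex.conj_re]
  exact hA.re_inner_nonneg_left z

theorem norm_innerA_sq_le (hA : A.IsPositive) (u v : E) :
    ‖innerA A u v‖ ^ 2 ≤ (innerA A u u).re * (innerA A v v).re := by
  -- `(u, v) ↦ ⟨v, u⟩_A` is a pre-inner product, so Cauchy–Schwarz applies to it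
  let _ : PreInnerProductSpace.Core ℂ E :=
    { inner u v := innerA A v u
      conj_inner_symm u v := conj_innerA hA u v
      re_inner_nonneg z := innerA_self_re_nonneg hA z
      add_left u v w := inner_add_left u v (A w)
      smul_left u v r := inner_smul_left u (A v) r }
  have h := InnerProductSpace.Core.inner_mul_inner_self_le (𝕜 := ℂ) v u
  change ‖innerA A u v‖ * ‖innerA A v u‖ ≤ (innerA A v v).re * (innerA A u u).re at h
  rwa [← conj_innerA hA u v, RCLike.norm_conj, ← sq, mul_comm] at h

theorem normA_nonneg_s6 (A : E →L[ℂ] E) (z : E) : 0 ≤ normA A z := Real.sqrt_nonneg _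

theorem sq_normA (hA : A.IsPositive) (z : E) : normA A z ^ 2 = (innerA A z z).re :=
  Real.sq_sqrt (innerA_self_re_nonneg hA z)

theorem innerA_self_eq_one (hA : A.IsPositive) {x : E} (hx : normA A x = 1) :
    innerA A x x = 1 := by
  refine Complex.ext (Real.sqrt_eq_one.mp hx) ?_
  simpa using Complex.conj_eq_iff_im.mp (conj_innerA hA x x)

theorem norm_innerA_le_one (hA : A.IsPositive) {u v : E} (hu : normA A u = 1)
    (hv : normA A v = 1) : ‖innerA A u v‖ ≤ 1 := by
  have h := norm_innerA_sq_le hA u v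
  rw [← sq_normA hA, ← sq_normA hA, hu, hv] at h
  exact (sq_le_one_iff₀ (norm_nonneg _)).mp (by simpa using h)

theorem sq_normA_smul_sub (hA : A.IsPositive) {x : E} (hx : innerA A x x = 1) (α : ℂ)
    (z : E) :
    normA A ((α * innerA A z x) • x - z) ^ 2
      = ‖innerA A z x‖ ^ 2 * ‖α - 1‖ ^ 2 + (normA A z ^ 2 - ‖innerA A z x‖ ^ 2) := by
  set c := innerA A z x
  have hxz : ⟪x, A z⟫ = c := rfl
  have hzx : ⟪z, A x⟫ = starRingEnd ℂ c := (conj_innerA hA z x).symm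
  have expand : innerA A ((α * c) • x - z) ((α * c) • x - z)
      = starRingEnd ℂ (α * c) * (α * c) * innerA A x x
        - starRingEnd ℂ (α * c) * c - α * c * starRingEnd ℂ c + innerA A z z := by
    simp only [innerA, map_sub, map_smul, inner_sub_left, inner_sub_right,
      inner_smul_left, inner_smul_right, hxz, hzx]
    ring
  rw [sq_normA hA, sq_normA hA, expand, hx]
  simp only [Complex.sq_norm, Complex.normSq_apply, Complex.add_re, Complex.sub_re,
    Complex.mul_re, Complex.mul_im, Complex.conj_re, Complex.conj_im, Complex.one_re,
    Complex.one_im, Complex.sub_im]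
  ring

variable {T : E →L[ℂ] E} {M : ℝ}

theorem normA_apply_le_opNormA (hT : ∀ w, normA A w = 1 → normA A (T w) ≤ M) {z : E}
    (hz : normA A z = 1) : normA A (T z) ≤ opNormA A T := by
  refine le_csSup ⟨M, ?_⟩ ⟨z, hz, rfl⟩
  rintro r ⟨w, hw, rfl⟩
  exact hT w hw

theorem opNormA_le (hT : ∀ w, normA A w = 1 → normA A (T w) ≤ M) {z : E}
    (hz : normA A z = 1) : opNormA A T ≤ M := by
  refine csSup_le ⟨_, z, hz, rfl⟩ ?_
  rintro r ⟨w, hw, rfl⟩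
  exact hT w hw

end SeminormA

theorem convex_comb_sq_le_max_sq {b t : ℝ} (hb : 0 ≤ b) (ht₀ : 0 ≤ t) (ht₁ : t ≤ 1) :
    t * b ^ 2 + (1 - t) ≤ max 1 b ^ 2 := by
  have h₁ : 1 ≤ max 1 b ^ 2 := one_le_pow₀ (le_max_left 1 b)
  have h₂ : b ^ 2 ≤ max 1 b ^ 2 := pow_le_pow_left₀ hb (le_max_right 1 b) 2
  nlinarith

theorem stmt6_general (A : H →L[ℂ] H) (hA : A.IsPositive)
    (x : H) (hx : normA A x = 1)
    (T : H →L[ℂ] H) (hT : ∀ z : H, T z = innerA A z x • x) (α : ℂ) :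
    (‖α - 1‖ ≤ opNormA A (α • T - 1)
      ∧ opNormA A (α • T - 1) ≤ max 1 (‖α - 1‖))
    ∧ (1 ≤ ‖α - 1‖ → opNormA A (α • T - 1) = ‖α - 1‖) := by
  have hxx := innerA_self_eq_one hA hx
  have happly (z : H) : (α • T - 1) z = (α * innerA A z x) • x - z := by
    simp [hT z, smul_smul]
  have hbound (z : H) (hz : normA A z = 1) : normA A ((α • T - 1) z) ≤ max 1 ‖α - 1‖ := by
    have hc := norm_innerA_le_one hA hz hx
    refine (pow_le_pow_iff_left₀ (normA_nonneg_s6 _ _) (by positivity) two_ne_zero).mp ?_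
    rw [happly, sq_normA_smul_sub hA hxx, hz, one_pow]
    exact convex_comb_sq_le_max_sq (norm_nonneg _) (sq_nonneg _) (pow_le_one₀ (norm_nonneg _) hc)
  have hattained : normA A ((α • T - 1) x) = ‖α - 1‖ := by
    rw [← sq_eq_sq₀ (normA_nonneg_s6 _ _) (norm_nonneg _), happly, sq_normA_smul_sub hA hxx, hx,
      hxx, norm_one]
    ring
  have hlow := hattained ▸ normA_apply_le_opNormA hbound hx
  have hup := opNormA_le hbound hx
  exact ⟨⟨hlow, hup⟩, fun h => le_antisymm (max_eq_right h ▸ hup) hlow⟩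

theorem stmt6 (A : H →L[ℂ] H) (hA : A.IsPositive) (hA0 : A ≠ 0)
    (x : H) (hx : normA A x = 1)
    (T : H →L[ℂ] H) (hT : ∀ z : H, T z = innerA A z x • x) (α : ℂ) :
    (‖α - 1‖ ≤ opNormA A (α • T - 1)
      ∧ opNormA A (α • T - 1) ≤ max 1 (‖α - 1‖))
    ∧ (1 ≤ ‖α - 1‖ → opNormA A (α • T - 1) = ‖α - 1‖) :=
  stmt6_general A hA x hx T hT α
end
end

section
/- For all vectors x, y, e ∈ H with ‖e‖_A = 1, one has |⟨x,e⟩_A · ⟨e,y⟩_A| ≤ ( ‖x‖_A·‖y‖_A + |⟨x,y⟩_A| ) / 2. -/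
/-! Buzano's inequality. With `‖e‖ = 1`, the vector `u = 2⟪e, x⟫ e - x` is the reflection of `x`
in the line through `e`, so `‖u‖ = ‖x‖`, and `2 ⟪x, e⟫⟪e, y⟫ = ⟪u, y⟫ + ⟪x, y⟫`; Cauchy–Schwarz for
`⟪u, y⟫` gives the bound. It holds in every semi-inner product space, in particular for `⟪x, A y⟫`
with `A` positive. -/

noncomputable section

open scoped ComplexInnerProductSpace

variable {H : Type*} [NormedAddCommGroup H] [InnerProductSpace ℂ H] [CompleteSpace H]

section Buzano

variable {𝕜 E : Type*} [RCLike 𝕜] [SeminormedAddCommGroup E] [InnerProductSpace 𝕜 E]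

open RCLike in
theorem norm_two_inner_smul_sub_self {e : E} (he : ‖e‖ = 1) (x : E) :
    ‖(2 * inner 𝕜 e x) • e - x‖ = ‖x‖ := by
  have hsq : ‖(2 * inner 𝕜 e x) • e - x‖ ^ 2 = ‖x‖ ^ 2 := by
    rw [@norm_sub_sq 𝕜, norm_smul, he, inner_smul_left, map_mul (starRingEnd 𝕜), conj_ofNat,
      mul_assoc, RCLike.conj_mul, norm_mul, norm_ofNat, ← ofReal_pow, ofNat_mul_re, ofReal_re]
    ring
  exact (pow_left_inj₀ (norm_nonneg _) (norm_nonneg _) two_ne_zero).mp hsq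

theorem norm_inner_mul_inner_le_of_norm_eq_one {e : E} (he : ‖e‖ = 1) (x y : E) :
    ‖inner 𝕜 x e * inner 𝕜 e y‖ ≤ (‖x‖ * ‖y‖ + ‖inner 𝕜 x y‖) / 2 := by
  set u := (2 * inner 𝕜 e x) • e - x
  have hu : 2 * (inner 𝕜 x e * inner 𝕜 e y) = inner 𝕜 u y + inner 𝕜 x y := by
    simp only [u, inner_sub_left, inner_smul_left, map_mul, inner_conj_symm, RCLike.conj_ofNat]
    ring
  have htwice := calc
    2 * ‖inner 𝕜 x e * inner 𝕜 e y‖ = ‖inner 𝕜 u y + inner 𝕜 x y‖ := by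
      rw [← hu, norm_mul (2 : 𝕜), RCLike.norm_ofNat]
    _ ≤ ‖u‖ * ‖y‖ + ‖inner 𝕜 x y‖ := by grw [norm_add_le, norm_inner_le_norm]
    _ = ‖x‖ * ‖y‖ + ‖inner 𝕜 x y‖ := by rw [norm_two_inner_smul_sub_self he]
  linarith

end Buzano

abbrev LinearMap.IsPositive.preInnerProductCore {𝕜 E : Type*} [RCLike 𝕜] [NormedAddCommGroup E]
    [InnerProductSpace 𝕜 E] {T : E →ₗ[𝕜] E} (hT : T.IsPositive) :
    PreInnerProductSpace.Core 𝕜 E where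
  inner x y := inner 𝕜 x (T y)
  conj_inner_symm x y := by rw [inner_conj_symm, hT.isSymmetric]
  re_inner_nonneg := hT.re_inner_nonneg_right
  add_left x y z := inner_add_left x y (T z)
  smul_left x y r := inner_smul_left x (T y) r

theorem PreInnerProductSpace.Core.norm_inner_mul_inner_le {𝕜 F : Type*} [RCLike 𝕜]
    [AddCommGroup F] [Module 𝕜 F] (c : PreInnerProductSpace.Core 𝕜 F) {e : F}
    (he : RCLike.re (c.inner e e) = 1) (x y : F) :
    ‖c.inner x e * c.inner e y‖
      ≤ (√(RCLike.re (c.inner x x)) * √(RCLike.re (c.inner y y)) + ‖c.inner x y‖) / 2 := by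
  let := c
  let := InnerProductSpace.Core.toSeminormedAddCommGroup (𝕜 := 𝕜) (F := F)
  let := InnerProductSpace.ofCore c
  have he' : ‖e‖ = 1 := by rw [norm_eq_sqrt_re_inner (𝕜 := 𝕜), he, Real.sqrt_one]
  exact norm_inner_mul_inner_le_of_norm_eq_one he' x y

theorem stmt8_general (A : H →L[ℂ] H) (hA : A.IsPositive)
    (x y e : H) (he : normA A e = 1) :
    ‖innerA A x e * innerA A e y‖
      ≤ (normA A x * normA A y + ‖innerA A x y‖) / 2 := by
  set c := hA.toLinearMap.preInnerProductCore
  have hee : RCLike.re (c.inner e e) = 1 := by rwa [normA, Real.sqrt_eq_one] at he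
  -- `innerA A x y = c.inner y x`: the paper's form is linear in its first slot, Mathlib's in its second.
  rw [mul_comm, mul_comm (normA A x)]
  exact c.norm_inner_mul_inner_le hee y x

theorem stmt8 (A : H →L[ℂ] H) (hA : A.IsPositive) (hA0 : A ≠ 0)
    (x y e : H) (he : normA A e = 1) :
    ‖innerA A x e * innerA A e y‖
      ≤ (normA A x * normA A y + ‖innerA A x y‖) / 2 :=
  stmt8_general A hA x y e he
end
end

section
/- Let B and C be A-bounded linear operators on H (i.e., there exists λ > 0 with ‖Bx‖_A ≤ λ‖x‖_A and ‖Cx‖_A ≤ λ‖x‖_A for all x). Then (w_{A,e}(B+C, B−C))² = 2·(w_{A,e}(B,C))². -/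
/- The set whose supremum is `wAe A (B + C) (B - C)` is the set for `wAe A B C` scaled by `√2`,
by the parallelogram law `|b + c|² + |b - c|² = 2 (|b|² + |c|²)` applied to `b = ⟨Bx,x⟩_A` and
`c = ⟨Cx,x⟩_A`. Scaling by a nonnegative constant commutes with `sSup` on `ℝ`, also when the set
is unbounded, where both sides take the junk value `0`. -/

noncomputable section

open scoped ComplexInnerProductSpace

variable {H : Type*} [NormedAddCommGroup H] [InnerProductSpace ℂ H] [CompleteSpace H]

lemma Complex.sqrt_sq_norm_add_add_sq_norm_sub (b c : ℂ) :
    √(‖b + c‖ ^ 2 + ‖b - c‖ ^ 2) = √2 * √(‖b‖ ^ 2 + ‖c‖ ^ 2) := by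
  rw [← Real.sqrt_mul zero_le_two]
  congr 1
  simpa only [sq] using parallelogram_law_with_norm ℂ b c

lemma wAe_add_sub (A B C : H →L[ℂ] H) : wAe A (B + C) (B - C) = √2 * wAe A B C := by
  rw [wAe, wAe, ← smul_eq_mul, ← Real.sSup_smul_of_nonneg (Real.sqrt_nonneg 2)]
  congr 1
  ext r
  simp only [Set.mem_smul_set, Set.mem_ofPred_eq, innerA, add_apply,
    sub_apply, map_add, map_sub, inner_add_right, inner_sub_right,
    Complex.sqrt_sq_norm_add_add_sq_norm_sub, smul_eq_mul]
  constructor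
  · rintro ⟨x, hx, rfl⟩
    exact ⟨_, ⟨x, hx, rfl⟩, rfl⟩
  · rintro ⟨_, ⟨x, hx, rfl⟩, rfl⟩
    exact ⟨x, hx, rfl⟩

theorem stmt16_general (A : H →L[ℂ] H)
    (B C : H →L[ℂ] H) :
    (wAe A (B + C) (B - C))^2 = 2 * (wAe A B C)^2 := by
  rw [wAe_add_sub, mul_pow, Real.sq_sqrt zero_le_two]

theorem stmt16 (A : H →L[ℂ] H) (hA : A.IsPositive) (hA0 : A ≠ 0)
    (B C : H →L[ℂ] H)
    (hBC : ∃ lam : ℝ, 0 < lam ∧ ∀ x : H,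
      normA A (B x) ≤ lam * normA A x ∧ normA A (C x) ≤ lam * normA A x) :
    (wAe A (B + C) (B - C))^2 = 2 * (wAe A B C)^2 :=
  stmt16_general A B C
end
end
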